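/- For binary Y, W and real X with βxw = 0, the intercept of the marginal-over-W model satisfies: the marginal log odds of Y at X=x equals β0 + βx·x − log[(1+exp g_0(x))/(1+exp g_1(x))], where g_y(x) = log[P(W=1|Y=y,X=x)/P(W=0|Y=y,X=x)]; equivalently, for the binary-X saturated marginal model the intercept is β*_0 = β0 − log[(1+exp g_0(0))/(1+exp g_1(0))]. -/

import Mathlib

noncomputable def expit (t : ℝ) : ℝ := Real.exp t / (1 + Real.exp t)

/-- `P(Y=1 | X=x, W=w)` under the logistic model. -/
noncomputable def pY (β0 βx βw βxw x w : ℝ) : ℝ := expit (β0 + βx * x + βw * w + βxw * x * w)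

/-- `P(W=1 | X=x)` under the logistic model. -/
noncomputable def pW (γ0 γx x : ℝ) : ℝ := expit (γ0 + γx * x)

/-- joint conditional probability `P(Y=y, W=w | X=x)` induced by the two logistic models. -/
noncomputable def jnt (β0 βx βw βxw γ0 γx x : ℝ) (y w : Bool) : ℝ :=
  (if y then pY β0 βx βw βxw x (if w then 1 else 0)
   else 1 - pY β0 βx βw βxw x (if w then 1 else 0)) *
  (if w then pW γ0 γx x else 1 - pW γ0 γx x)

/-- `P(W=w | Y=y, X=x)` obtained via Bayes' theorem. -/
noncomputable def pWgYX (β0 βx βw βxw γ0 γx x : ℝ) (y w : Bool) : ℝ :=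
  jnt β0 βx βw βxw γ0 γx x y w /
    (jnt β0 βx βw βxw γ0 γx x y true + jnt β0 βx βw βxw γ0 γx x y false)

/-- marginal (over `W`) probability `P(Y=y | X=x)`. -/
noncomputable def pYgX (β0 βx βw βxw γ0 γx x : ℝ) (y : Bool) : ℝ :=
  jnt β0 βx βw βxw γ0 γx x y true + jnt β0 βx βw βxw γ0 γx x y false

/-- `g_y(x)`, the conditional log odds of `W` given `Y=y, X=x`. -/
noncomputable def g (β0 βx βw βxw γ0 γx : ℝ) (y : Bool) (x : ℝ) : ℝ :=
  Real.log (pWgYX β0 βx βw βxw γ0 γx x y true / pWgYX β0 βx βw βxw γ0 γx x y false)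

/-- the marginal log odds of `Y` given `X=x`. -/
noncomputable def margLogit (β0 βx βw βxw γ0 γx : ℝ) (x : ℝ) : ℝ :=
  Real.log (pYgX β0 βx βw βxw γ0 γx x true / pYgX β0 βx βw βxw γ0 γx x false)

/-- `β(x)`, the marginal log-odds effect of `X` on `Y`. -/
noncomputable def betaMarg (β0 βx βw βxw γ0 γx : ℝ) (x : ℝ) : ℝ :=
  deriv (margLogit β0 βx βw βxw γ0 γx) x

/-
Conditioning on `W = 0` shows that the odds of `Y` given `(X, W) = (x, 0)` equal
`P(Y=1, W=0 | x) / P(Y=0, W=0 | x) = exp (β0 + βx x)`. Bayes' rule gives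
`1 + exp g_y(x) = P(Y=y | x) / P(Y=y, W=0 | x)`, so the ratio
`(1 + exp g_0(x)) / (1 + exp g_1(x))` is exactly the factor converting these
conditional odds into the marginal odds `P(Y=1 | x) / P(Y=0 | x)`.
-/

lemma expit_pos (t : ℝ) : 0 < expit t := by
  unfold expit
  positivity

lemma one_sub_expit_eq (t : ℝ) : 1 - expit t = 1 / (1 + Real.exp t) := by
  unfold expit
  field_simp
  ring

lemma expit_lt_one (t : ℝ) : expit t < 1 :=
  (div_lt_one (by positivity)).2 (lt_one_add _)

lemma one_sub_expit_pos (t : ℝ) : 0 < 1 - expit t :=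
  sub_pos.2 (expit_lt_one t)

lemma expit_div_one_sub_expit (t : ℝ) : expit t / (1 - expit t) = Real.exp t := by
  rw [one_sub_expit_eq, expit]
  field_simp

lemma jnt_pos (β0 βx βw βxw γ0 γx x : ℝ) (y w : Bool) :
    0 < jnt β0 βx βw βxw γ0 γx x y w := by
  unfold jnt pY pW
  cases y <;> cases w <;>
    exact mul_pos (by simp [expit_pos, expit_lt_one]) (by simp [expit_pos, expit_lt_one])

lemma pYgX_pos (β0 βx βw βxw γ0 γx x : ℝ) (y : Bool) :
    0 < pYgX β0 βx βw βxw γ0 γx x y :=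
  add_pos (jnt_pos ..) (jnt_pos ..)

lemma jnt_odds_of_w_false (β0 βx βw βxw γ0 γx x : ℝ) :
    jnt β0 βx βw βxw γ0 γx x true false / jnt β0 βx βw βxw γ0 γx x false false
      = Real.exp (β0 + βx * x) := by
  have hW := (one_sub_expit_pos (γ0 + γx * x)).ne'
  simp only [jnt, pY, pW, Bool.false_eq_true, if_true, if_false, mul_zero, add_zero]
  rw [mul_div_mul_right _ _ hW, expit_div_one_sub_expit]

lemma one_add_exp_log_div_div {a b : ℝ} (ha : 0 < a) (hb : 0 < b) :
    1 + Real.exp (Real.log (a / (a + b) / (b / (a + b)))) = (a + b) / b := by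
  rw [Real.exp_log (by positivity)]
  field_simp
  ring

lemma one_add_exp_g (β0 βx βw βxw γ0 γx x : ℝ) (y : Bool) :
    1 + Real.exp (g β0 βx βw βxw γ0 γx y x)
      = pYgX β0 βx βw βxw γ0 γx x y / jnt β0 βx βw βxw γ0 γx x y false :=
  one_add_exp_log_div_div (jnt_pos ..) (jnt_pos ..)

lemma log_div_eq_log_div_sub_log_div_div {p₀ p₁ b₀ b₁ : ℝ} (hp₀ : p₀ ≠ 0) (hp₁ : p₁ ≠ 0)
    (hb₀ : b₀ ≠ 0) (hb₁ : b₁ ≠ 0) :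
    Real.log (p₁ / p₀) = Real.log (b₁ / b₀) - Real.log (p₀ / b₀ / (p₁ / b₁)) := by
  simp only [Real.log_div, div_ne_zero, *, ne_eq, not_false_eq_true]
  ring

theorem marginal_intercept_general (β0 βx βw βxw γ0 γx : ℝ) :
    (∀ x : ℝ, margLogit β0 βx βw βxw γ0 γx x
      = β0 + βx * x
        - Real.log ((1 + Real.exp (g β0 βx βw βxw γ0 γx false x)) /
                    (1 + Real.exp (g β0 βx βw βxw γ0 γx true x)))) ∧
    margLogit β0 βx βw βxw γ0 γx 0
      = β0 - Real.log ((1 + Real.exp (g β0 βx βw βxw γ0 γx false 0)) /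
                       (1 + Real.exp (g β0 βx βw βxw γ0 γx true 0))) := by
  have h : ∀ x : ℝ, margLogit β0 βx βw βxw γ0 γx x
      = β0 + βx * x
        - Real.log ((1 + Real.exp (g β0 βx βw βxw γ0 γx false x)) /
                    (1 + Real.exp (g β0 βx βw βxw γ0 γx true x))) := by
    intro x
    rw [margLogit, one_add_exp_g, one_add_exp_g,
      log_div_eq_log_div_sub_log_div_div (pYgX_pos ..).ne' (pYgX_pos ..).ne'
        (jnt_pos ..).ne' (jnt_pos ..).ne',
      jnt_odds_of_w_false, Real.log_exp]
  exact ⟨h, by simpa using h 0⟩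

/-- With `βxw = 0`, the marginal log odds of `Y` at `X = x` equals
`β0 + βx·x − log[(1+exp g_0(x))/(1+exp g_1(x))]`; in particular, for the binary-`X`
saturated marginal model the intercept is `β*_0 = β0 − log[(1+exp g_0(0))/(1+exp g_1(0))]`. -/
theorem marginal_intercept (β0 βx βw βxw γ0 γx : ℝ) (hxw : βxw = 0) :
    (∀ x : ℝ, margLogit β0 βx βw βxw γ0 γx x
      = β0 + βx * x
        - Real.log ((1 + Real.exp (g β0 βx βw βxw γ0 γx false x)) /
                    (1 + Real.exp (g β0 βx βw βxw γ0 γx true x)))) ∧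
    margLogit β0 βx βw βxw γ0 γx 0
      = β0 - Real.log ((1 + Real.exp (g β0 βx βw βxw γ0 γx false 0)) /
                       (1 + Real.exp (g β0 βx βw βxw γ0 γx true 0))) :=
  marginal_intercept_general β0 βx βw βxw γ0 γx
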